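/- Composite correctness of one tape-move-left update: let s : ℤ → {0,1} represent a bi-infinite tape with head at 0, let r = C⁺(s₀ s₁ s₂ …), l = C⁻(s₋₁ s₋₂ …), and let s' ∈ {0,1} be the symbol written. Then the new encodings after writing s' at position 0 and moving the head left are r_new = −r/4 + (2 s₋₁ + 1)/4 + (2 s₀ + 1)/16 − (2 s' + 1)/16 and l_new = −4l + (2 s₋₁ + 1), and these equal C⁺ and C⁻ of the updated tape halves respectively. -/

import Mathlib

/-- A real number is a bit: `0` or `1`. -/
def IsBit (x : ℝ) : Prop := x = 0 ∨ x = 1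

/-- Cantor-like encoding of the right half-tape of a bi-infinite tape `f : ℤ → ℝ` read
from head position `h`: `C⁺(f_h f_{h+1} …) = ∑_{k≥0} (-1)^k (2 f_{h+k} + 1)/4^(k+1)`. -/
noncomputable def Cright (f : ℤ → ℝ) (h : ℤ) : ℝ :=
  ∑' k : ℕ, (-1 : ℝ) ^ k * (2 * f (h + k) + 1) / 4 ^ (k + 1)

/-- Cantor-like encoding of the left half-tape of a bi-infinite tape `f : ℤ → ℝ` read
from head position `h`: `C⁻(f_{h-1} f_{h-2} …) = ∑_{k≥1} (-1)^(k+1) (2 f_{h-k} + 1)/4^k`. -/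
noncomputable def Cleft (f : ℤ → ℝ) (h : ℤ) : ℝ :=
  ∑' k : ℕ, (-1 : ℝ) ^ k * (2 * f (h - (k + 1)) + 1) / 4 ^ (k + 1)

/-
Both half-tape encodings are the one-sided code `C(u) = ∑ (-1)^k (2 u_k + 1)/4^(k+1)` of the
sequence read away from the head, and `C(u) = (2 u₀ + 1)/4 - C(u₁ u₂ …)/4`. Moving the head
left pushes `s₋₁` onto the right half and pops it from the left half, so each new encoding is
one or two applications of this recurrence away from the old one; beyond the written cell the
two tapes agree.
-/

lemma IsBit.abs_le_one {x : ℝ} (hx : IsBit x) : |x| ≤ 1 := by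
  rcases hx with rfl | rfl <;> norm_num

noncomputable def cantorTerm (u : ℕ → ℝ) (k : ℕ) : ℝ :=
  (-1 : ℝ) ^ k * (2 * u k + 1) / 4 ^ (k + 1)

noncomputable def cantorCode (u : ℕ → ℝ) : ℝ :=
  ∑' k, cantorTerm u k

lemma cantorTerm_succ (u : ℕ → ℝ) (k : ℕ) :
    cantorTerm u (k + 1) = -cantorTerm (fun k => u (k + 1)) k / 4 := by
  simp only [cantorTerm, pow_succ]
  ring

lemma summable_cantorTerm_of_abs_le {u : ℕ → ℝ} {C : ℝ} (hu : ∀ k, |u k| ≤ C) :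
    Summable (cantorTerm u) := by
  refine Summable.of_norm_bounded
    ((summable_geometric_of_lt_one (by norm_num) (by norm_num : (1 / 4 : ℝ) < 1)).mul_left
      ((2 * C + 1) / 4)) fun k => ?_
  have hterm : ‖cantorTerm u k‖ = |2 * u k + 1| / 4 ^ (k + 1) := by
    simp [cantorTerm]
  have hdigit : |2 * u k + 1| ≤ 2 * C + 1 := by
    calc |2 * u k + 1| ≤ |2 * u k| + |1| := abs_add_le _ _
      _ = 2 * |u k| + 1 := by simp [abs_mul]
      _ ≤ 2 * C + 1 := by linarith [hu k]
  rw [hterm, div_le_iff₀ (by positivity), one_div_pow, pow_succ]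
  field_simp
  exact hdigit

lemma cantorCode_eq_head_sub_tail {u : ℕ → ℝ}
    (hu : Summable (cantorTerm fun k => u (k + 1))) :
    cantorCode u = (2 * u 0 + 1) / 4 - cantorCode (fun k => u (k + 1)) / 4 := by
  have hshift : Summable fun k => cantorTerm u (k + 1) := by
    simpa only [cantorTerm_succ, neg_div] using (hu.div_const 4).neg
  rw [cantorCode, tsum_eq_zero_add' hshift]
  simp only [cantorTerm_succ, neg_div, tsum_neg, tsum_div_const]
  simp only [cantorCode, cantorTerm, pow_zero, one_mul, zero_add, pow_one]
  ring

lemma Cright_eq_cantorCode (f : ℤ → ℝ) (h : ℤ) :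
    Cright f h = cantorCode fun k => f (h + k) :=
  rfl

lemma Cleft_eq_cantorCode (f : ℤ → ℝ) (h : ℤ) :
    Cleft f h = cantorCode fun k => f (h - (k + 1)) :=
  rfl

section Tape

variable {f g : ℤ → ℝ} {C : ℝ}

lemma Cright_eq_head_sub (hf : ∀ n, |f n| ≤ C) (h : ℤ) :
    Cright f h = (2 * f h + 1) / 4 - Cright f (h + 1) / 4 := by
  rw [Cright_eq_cantorCode, cantorCode_eq_head_sub_tail
    (summable_cantorTerm_of_abs_le fun k => hf _), Cright_eq_cantorCode]
  simp only [Nat.cast_zero, add_zero, Nat.cast_succ, add_assoc, add_comm (1 : ℤ)]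

lemma Cleft_succ_eq_head_sub (hf : ∀ n, |f n| ≤ C) (h : ℤ) :
    Cleft f (h + 1) = (2 * f h + 1) / 4 - Cleft f h / 4 := by
  rw [Cleft_eq_cantorCode, cantorCode_eq_head_sub_tail
    (summable_cantorTerm_of_abs_le fun k => hf _), Cleft_eq_cantorCode]
  simp only [Nat.cast_zero, zero_add, add_sub_cancel_right, Nat.cast_succ]
  congr 4 with k
  ring_nf

lemma Cright_congr {h : ℤ} (hfg : ∀ n, h ≤ n → f n = g n) : Cright f h = Cright g h := by
  simp only [Cright_eq_cantorCode]
  congr with k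
  exact hfg _ (by omega)

lemma Cleft_congr {h : ℤ} (hfg : ∀ n, n < h → f n = g n) : Cleft f h = Cleft g h := by
  simp only [Cleft_eq_cantorCode]
  congr with k
  exact hfg _ (by omega)

end Tape

theorem tape_move_left_update_general (s : ℤ → ℝ) (hs : ∀ n, IsBit (s n)) (s' : ℝ) :
    let r := Cright s 0
    let l := Cleft s 0
    let t : ℤ → ℝ := fun n => if n = 0 then s' else s n
    (-r / 4 + (2 * s (-1) + 1) / 4 + (2 * s 0 + 1) / 16 - (2 * s' + 1) / 16
        = Cright t (-1)) ∧
    (-4 * l + (2 * s (-1) + 1) = Cleft t (-1)) := by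
  intro r l t
  have hs_le (n : ℤ) : |s n| ≤ 1 := (hs n).abs_le_one
  have ht_le (n : ℤ) : |t n| ≤ max |s'| 1 := by
    by_cases hn : n = 0
    · simp [t, hn]
    · simpa [t, hn] using Or.inr (hs_le n)
  have hright : Cright t 1 = Cright s 1 := Cright_congr fun n hn => if_neg (by omega)
  have hleft : Cleft t (-1) = Cleft s (-1) := Cleft_congr fun n hn => if_neg (by omega)
  have hr : r = (2 * s 0 + 1) / 4 - Cright s 1 / 4 := Cright_eq_head_sub hs_le 0
  have hl : l = (2 * s (-1) + 1) / 4 - Cleft s (-1) / 4 := by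
    simpa using Cleft_succ_eq_head_sub hs_le (-1)
  have ht₀ : Cright t 0 = (2 * s' + 1) / 4 - Cright t 1 / 4 := Cright_eq_head_sub ht_le 0
  have ht : Cright t (-1) = (2 * s (-1) + 1) / 4 - Cright t 0 / 4 :=
    Cright_eq_head_sub ht_le (-1)
  constructor
  · rw [ht, ht₀, hright, hr]
    ring
  · rw [hleft, hl]
    ring

theorem tape_move_left_update (s : ℤ → ℝ) (hs : ∀ n, IsBit (s n)) (s' : ℝ) (hs' : IsBit s') :
    let r := Cright s 0
    let l := Cleft s 0
    let t : ℤ → ℝ := fun n => if n = 0 then s' else s n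
    (-r / 4 + (2 * s (-1) + 1) / 4 + (2 * s 0 + 1) / 16 - (2 * s' + 1) / 16
        = Cright t (-1)) ∧
    (-4 * l + (2 * s (-1) + 1) = Cleft t (-1)) :=
  tape_move_left_update_general s hs s'
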